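/- Let G(0),...,G(k−1) be a sequence of B-connected undirected graphs with self-loops on n nodes satisfying the constant-degree assumption (d_i(t) ∈ {1, d_i}). Then the weighted variance V'(x(t)) = Σ_i d_i (x_i(t) − x̄)^2 of the equal-neighbor iteration satisfies V'(x((m+1)B)) ≤ (1 − 1/(2n^3)) V'(x(mB)) for every integer m ≥ 0. -/

import Mathlib

/-!
Over one step the weighted variance `∑ᵢ dᵢ (xᵢ - c)²` drops by exactly the dissipation
`∑ᵢ ∑_{j ∈ Nᵢ} (xⱼ - avgᵢ)²`: a node whose degree is not `dᵢ` is isolated and does not move, so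
the weights may be replaced by the actual degrees, and then the drop is a double-counting identity.

Sort the values at the start of a block as `w₀ ≤ ⋯ ≤ wₙ`. For each gap `k`, the nodes of rank
`≤ k` stay below `w_k` and the others stay above `w_{k+1}` until an edge first crosses this cut,
which `B`-connectivity forces to happen inside the block. At that moment the neighbourhood of the
lower endpoint straddles the gap; all gaps charged to one neighbourhood lie inside the range of its
values, so together they cost at most twice its share of the dissipation. Hence the variance drops
by at least `½ ∑ₖ (w_{k+1} - w_k)² ≥ (wₙ - w₀)² / (2n)`, while it was at most
`(∑ᵢ dᵢ) (wₙ - w₀)² ≤ (n + 1)² (wₙ - w₀)²` because `x̄` is a weighted mean of the values.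
-/

open Finset Relation

namespace EqualNeighbor

variable {ι : Type*}

noncomputable def eqNbrAvg (A : ι → Finset ι) (u : ι → ℝ) (i : ι) : ℝ :=
  (∑ j ∈ A i, u j) / (A i).card

noncomputable def dissipation [Fintype ι] (A : ι → Finset ι) (u : ι → ℝ) : ℝ :=
  ∑ i, ∑ j ∈ A i, (u j - eqNbrAvg A u i) ^ 2

def CrossesCut (A : ι → Finset ι) (L : ι → Prop) : Prop :=
  ∃ i j, L i ∧ ¬ L j ∧ j ∈ A i

def CutSeparates (L : ι → Prop) (α β : ℝ) (u : ι → ℝ) : Prop :=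
  (∀ i, L i → u i ≤ α) ∧ ∀ i, ¬ L i → β ≤ u i

section WeightedMean

variable {κ : Type*}

lemma sum_mul_sq_sub_eq (s : Finset κ) (ω u : κ → ℝ) {m : ℝ}
    (hm : ∑ j ∈ s, ω j * (u j - m) = 0) (c : ℝ) :
    ∑ j ∈ s, ω j * (u j - c) ^ 2
      = ∑ j ∈ s, ω j * (u j - m) ^ 2 + (∑ j ∈ s, ω j) * (m - c) ^ 2 := by
  calc ∑ j ∈ s, ω j * (u j - c) ^ 2
      = ∑ j ∈ s,
          (ω j * (u j - m) ^ 2 + 2 * (m - c) * (ω j * (u j - m)) + ω j * (m - c) ^ 2) :=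
        sum_congr rfl fun _ _ => by ring
    _ = _ := by rw [sum_add_distrib, sum_add_distrib, ← mul_sum, hm, ← sum_mul]; ring

lemma sum_mul_sub_div_sum_eq_zero [Fintype κ] (ω : κ → ℝ) (hω : ∀ i, 0 ≤ ω i) (u : κ → ℝ) :
    ∑ i, ω i * (u i - (∑ j, ω j * u j) / ∑ j, ω j) = 0 := by
  by_cases h : ∑ j, ω j = 0
  · have hω0 := (sum_eq_zero_iff_of_nonneg fun i _ => hω i).1 h
    simp [hω0]
  · simp only [mul_sub, sum_sub_distrib, ← sum_mul, mul_div_cancel₀ _ h, sub_self]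

lemma sum_mul_sq_sub_le_of_mem_Icc [Fintype κ] {ω u : κ → ℝ} (hω : ∀ i, 0 ≤ ω i) {m a b : ℝ}
    (hm : ∑ i, ω i * (u i - m) = 0) (hu : ∀ i, u i ∈ Set.Icc a b) :
    ∑ i, ω i * (u i - m) ^ 2 ≤ (∑ i, ω i) * (b - a) ^ 2 := by
  have hωsum : 0 ≤ ∑ i, ω i := sum_nonneg fun i _ => hω i
  calc ∑ i, ω i * (u i - m) ^ 2
      ≤ ∑ i, ω i * (u i - m) ^ 2 + (∑ i, ω i) * (m - a) ^ 2 :=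
        le_add_of_nonneg_right (mul_nonneg hωsum (sq_nonneg _))
    _ = ∑ i, ω i * (u i - a) ^ 2 := (sum_mul_sq_sub_eq _ ω u hm a).symm
    _ ≤ ∑ i, ω i * (b - a) ^ 2 := sum_le_sum fun i _ => mul_le_mul_of_nonneg_left
        (pow_le_pow_left₀ (sub_nonneg.2 (hu i).1) (sub_le_sub_right (hu i).2 a) 2) (hω i)
    _ = (∑ i, ω i) * (b - a) ^ 2 := (sum_mul ..).symm

end WeightedMean

section Averaging

variable {A : ι → Finset ι}

lemma eqNbrAvg_le {i : ι} (hi : i ∈ A i) {u : ι → ℝ} {α : ℝ} (h : ∀ j ∈ A i, u j ≤ α) :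
    eqNbrAvg A u i ≤ α := by
  rw [eqNbrAvg, ← expect_eq_sum_div_card]
  exact expect_le ⟨i, hi⟩ h

lemma le_eqNbrAvg {i : ι} (hi : i ∈ A i) {u : ι → ℝ} {β : ℝ} (h : ∀ j ∈ A i, β ≤ u j) :
    β ≤ eqNbrAvg A u i := by
  rw [eqNbrAvg, ← expect_eq_sum_div_card]
  exact le_expect ⟨i, hi⟩ h

lemma card_mul_eqNbrAvg {i : ι} (hi : i ∈ A i) (u : ι → ℝ) :
    ((A i).card : ℝ) * eqNbrAvg A u i = ∑ j ∈ A i, u j :=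
  mul_div_cancel₀ _ (Nat.cast_ne_zero.2 (card_ne_zero_of_mem hi))

lemma sum_sq_sub_eq {i : ι} (hi : i ∈ A i) (u : ι → ℝ) (c : ℝ) :
    ∑ j ∈ A i, (u j - c) ^ 2
      = ∑ j ∈ A i, (u j - eqNbrAvg A u i) ^ 2 + (A i).card * (eqNbrAvg A u i - c) ^ 2 := by
  have hm : ∑ j ∈ A i, 1 * (u j - eqNbrAvg A u i) = 0 := by
    simp only [one_mul, sum_sub_distrib, sum_const, nsmul_eq_mul, card_mul_eqNbrAvg hi, sub_self]
  simpa using sum_mul_sq_sub_eq (A i) (fun _ => 1) u hm c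

lemma sum_sum_eq_sum_card_mul [Fintype ι] (hsym : ∀ i j, j ∈ A i ↔ i ∈ A j) (F : ι → ℝ) :
    ∑ i, ∑ j ∈ A i, F j = ∑ j, ((A j).card : ℝ) * F j := by
  rw [sum_comm' (t' := univ) (s' := A) (by simp [hsym])]
  simp

lemma weight_mul_sub_eq_card_mul (hself : ∀ i, i ∈ A i) {d : ι → ℕ} {i : ι}
    (hdeg : (A i).card = d i ∨ (A i).card = 1) (G : ℝ → ℝ) (u : ι → ℝ) :
    (d i : ℝ) * (G (u i) - G (eqNbrAvg A u i))
      = (A i).card * (G (u i) - G (eqNbrAvg A u i)) := by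
  rcases hdeg with h | h
  · rw [h]
  · have hAi : A i = {i} := eq_singleton_iff_unique_mem.2
      ⟨hself i, fun j hj => card_le_one.1 h.le _ hj _ (hself i)⟩
    simp [eqNbrAvg, hAi]

variable [Fintype ι] {d : ι → ℕ} (hsym : ∀ i j, j ∈ A i ↔ i ∈ A j) (hself : ∀ i, i ∈ A i)
  (hdeg : ∀ i, (A i).card = d i ∨ (A i).card = 1)
include hsym hself hdeg

lemma sum_weight_mul_eqNbrAvg (u : ι → ℝ) :
    ∑ i, (d i : ℝ) * eqNbrAvg A u i = ∑ i, (d i : ℝ) * u i := by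
  have h := sum_congr rfl fun i (_ : i ∈ univ) => weight_mul_sub_eq_card_mul hself (hdeg i) id u
  simp only [id, mul_sub, sum_sub_distrib, card_mul_eqNbrAvg (hself _),
    sum_sum_eq_sum_card_mul hsym, sub_self, sub_eq_zero] at h
  exact h.symm

lemma sum_weight_mul_sq_sub_sub_eqNbrAvg (u : ι → ℝ) (c : ℝ) :
    ∑ i, (d i : ℝ) * (u i - c) ^ 2 - ∑ i, (d i : ℝ) * (eqNbrAvg A u i - c) ^ 2
      = dissipation A u := by
  calc _ = ∑ i, ((A i).card : ℝ) * ((u i - c) ^ 2 - (eqNbrAvg A u i - c) ^ 2) := by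
        rw [← sum_sub_distrib]
        exact sum_congr rfl fun i _ => by
          rw [← mul_sub, weight_mul_sub_eq_card_mul hself (hdeg i) (fun z => (z - c) ^ 2)]
    _ = ∑ i, (∑ j ∈ A i, (u j - c) ^ 2 - (A i).card * (eqNbrAvg A u i - c) ^ 2) := by
        simp only [mul_sub, sum_sub_distrib, sum_sum_eq_sum_card_mul hsym]
    _ = dissipation A u := sum_congr rfl fun i _ => by rw [sum_sq_sub_eq (hself i)]; ring

end Averaging

section Gaps

variable {w : ℕ → ℝ}

lemma sum_sq_sub_le_sq_of_monotone (hw : Monotone w) {K : Finset ℕ} {a b : ℝ}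
    (h : ∀ k ∈ K, a ≤ w k ∧ w (k + 1) ≤ b) : ∑ k ∈ K, (w (k + 1) - w k) ^ 2 ≤ (b - a) ^ 2 := by
  rcases K.eq_empty_or_nonempty with rfl | hK
  · simpa using sq_nonneg (b - a)
  have hgap : ∀ k, 0 ≤ w (k + 1) - w k := fun k => sub_nonneg.2 (hw k.le_succ)
  have hsum : ∑ k ∈ K, (w (k + 1) - w k) ≤ b - a :=
    calc ∑ k ∈ K, (w (k + 1) - w k)
        ≤ ∑ k ∈ Ico (K.min' hK) (K.max' hK + 1), (w (k + 1) - w k) :=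
          sum_le_sum_of_subset_of_nonneg
            (fun k hk => mem_Ico.2 ⟨K.min'_le k hk, Nat.lt_succ_of_le (K.le_max' k hk)⟩)
            fun k _ _ => hgap k
      _ = w (K.max' hK + 1) - w (K.min' hK) :=
          sum_Ico_sub w ((K.min'_le_max' hK).trans (Nat.le_succ _))
      _ ≤ b - a := sub_le_sub (h _ (K.max'_mem hK)).2 (h _ (K.min'_mem hK)).1
  calc ∑ k ∈ K, (w (k + 1) - w k) ^ 2 ≤ (∑ k ∈ K, (w (k + 1) - w k)) ^ 2 :=
        sum_sq_le_sq_sum_of_nonneg fun k _ => hgap k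
    _ ≤ (b - a) ^ 2 := pow_le_pow_left₀ (sum_nonneg fun k _ => hgap k) hsum 2

lemma sq_sub_le_mul_sum_sq_sub (w : ℕ → ℝ) (n : ℕ) :
    (w n - w 0) ^ 2 ≤ n * ∑ k ∈ range n, (w (k + 1) - w k) ^ 2 := by
  have := sq_sum_le_card_mul_sum_sq (s := range n) (f := fun k => w (k + 1) - w k)
  rwa [sum_range_sub, card_range] at this

lemma sq_sub_le_two_mul_sum_sq_sub {s : Finset ι} {a b : ι} (ha : a ∈ s) (hb : b ∈ s)
    (u : ι → ℝ) (c : ℝ) : (u b - u a) ^ 2 ≤ 2 * ∑ j ∈ s, (u j - c) ^ 2 := by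
  classical
  rcases eq_or_ne a b with rfl | hab
  · simpa using sum_nonneg fun j (_ : j ∈ s) => sq_nonneg (u j - c)
  have hpair : (u a - c) ^ 2 + (u b - c) ^ 2 ≤ ∑ j ∈ s, (u j - c) ^ 2 := by
    rw [← sum_pair (f := fun j => (u j - c) ^ 2) hab]
    exact sum_le_sum_of_subset_of_nonneg (insert_subset ha (singleton_subset_iff.2 hb))
      fun j _ _ => sq_nonneg _
  nlinarith [sq_nonneg (u a + u b - 2 * c)]

lemma sum_sq_gaps_le_two_mul_sum_sq_sub (hw : Monotone w) {s : Finset ι} {u : ι → ℝ}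
    {K : Finset ℕ} (hK : ∀ k ∈ K, (∃ a ∈ s, u a ≤ w k) ∧ ∃ b ∈ s, w (k + 1) ≤ u b) (c : ℝ) :
    ∑ k ∈ K, (w (k + 1) - w k) ^ 2 ≤ 2 * ∑ j ∈ s, (u j - c) ^ 2 := by
  rcases K.eq_empty_or_nonempty with rfl | ⟨k, hk⟩
  · simpa using sum_nonneg fun j (_ : j ∈ s) => sq_nonneg (u j - c)
  obtain ⟨⟨a, ha, -⟩, -⟩ := hK k hk
  obtain ⟨lo, hlo, hlo_min⟩ := s.exists_min_image u ⟨a, ha⟩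
  obtain ⟨hi, hhi, hhi_max⟩ := s.exists_max_image u ⟨a, ha⟩
  refine (sum_sq_sub_le_sq_of_monotone hw fun k hk => ?_).trans
    (sq_sub_le_two_mul_sum_sq_sub hlo hhi u c)
  obtain ⟨⟨a, ha, hak⟩, b, hb, hbk⟩ := hK k hk
  exact ⟨(hlo_min a ha).trans hak, hbk.trans (hhi_max b hb)⟩

end Gaps

section Cuts

variable {A : ι → Finset ι} {L : ι → Prop} {α β : ℝ} {u : ι → ℝ}

lemma CutSeparates.eqNbrAvg_of_not_crossesCut (hsym : ∀ i j, j ∈ A i ↔ i ∈ A j)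
    (hself : ∀ i, i ∈ A i) (hA : ¬ CrossesCut A L) (h : CutSeparates L α β u) :
    CutSeparates L α β (eqNbrAvg A u) := by
  refine ⟨fun i hi => eqNbrAvg_le (hself i) fun j hj => h.1 j ?_,
    fun i hi => le_eqNbrAvg (hself i) fun j hj => h.2 j ?_⟩
  · by_contra hj'
    exact hA ⟨i, j, hi, hj', hj⟩
  · intro hj'
    exact hA ⟨j, i, hj', hi, (hsym i j).1 hj⟩

lemma exists_rel_of_reflTransGen {α : Type*} {r : α → α → Prop} {p : α → Prop} {a b : α}
    (h : ReflTransGen r a b) (ha : p a) (hb : ¬ p b) : ∃ x y, p x ∧ ¬ p y ∧ r x y := by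
  by_contra! H
  exact hb (h.rec ha fun _ hcd hc => by_contra fun hd => H _ _ hc hd hcd)

lemma exists_lt_crossesCut {N : ℕ → ι → Finset ι} {T B : ℕ}
    (hconn : ∀ i j, ReflTransGen (fun a b => ∃ t, T ≤ t ∧ t < T + B ∧ b ∈ N t a) i j)
    {L : ι → Prop} {i j : ι} (hi : L i) (hj : ¬ L j) : ∃ s < B, CrossesCut (N (T + s)) L := by
  obtain ⟨a, b, ha, hb, t, hTt, htB, hab⟩ := exists_rel_of_reflTransGen (hconn i j) hi hj
  exact ⟨t - T, by omega, a, b, ha, hb, by rwa [Nat.add_sub_cancel' hTt]⟩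

lemma sum_le_sum_sum_filter_of_forall_exists {α β : Type*} {s : Finset α} {t : Finset β}
    {P : β → α → Prop} [∀ b a, Decidable (P b a)] {g : α → ℝ} (hg : ∀ a ∈ s, 0 ≤ g a)
    (hP : ∀ a ∈ s, ∃ b ∈ t, P b a) : ∑ a ∈ s, g a ≤ ∑ b ∈ t, ∑ a ∈ s with P b a, g a := by
  rw [sum_comm' (t' := s) (s' := fun a => t.filter (P · a))
    fun _ _ => by simp only [mem_filter]; tauto]
  refine sum_le_sum fun a ha => ?_
  obtain ⟨b, hb, hPb⟩ := hP a ha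
  exact single_le_sum (f := fun _ => g a) (fun _ _ => hg a ha) (mem_filter.2 ⟨hb, hPb⟩)

lemma sum_sq_gaps_le_two_mul_dissipation [Fintype ι] (hself : ∀ i, i ∈ A i) {w : ℕ → ℝ}
    (hw : Monotone w) {L : ℕ → ι → Prop} {K : Finset ℕ}
    (hK : ∀ k ∈ K, CutSeparates (L k) (w k) (w (k + 1)) u ∧ CrossesCut A (L k)) :
    ∑ k ∈ K, (w (k + 1) - w k) ^ 2 ≤ 2 * dissipation A u := by
  classical
  calc ∑ k ∈ K, (w (k + 1) - w k) ^ 2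
      ≤ ∑ i, ∑ k ∈ K with L k i ∧ ∃ j ∈ A i, ¬ L k j, (w (k + 1) - w k) ^ 2 := by
        refine sum_le_sum_sum_filter_of_forall_exists (fun _ _ => sq_nonneg _) fun k hk => ?_
        obtain ⟨i, j, hi, hj, hij⟩ := (hK k hk).2
        exact ⟨i, mem_univ i, hi, j, hij, hj⟩
    _ ≤ ∑ i, 2 * ∑ j ∈ A i, (u j - eqNbrAvg A u i) ^ 2 := by
        refine sum_le_sum fun i _ => sum_sq_gaps_le_two_mul_sum_sq_sub hw (fun k hk => ?_) _
        obtain ⟨hk, hi, j, hj, hjk⟩ := mem_filter.1 hk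
        exact ⟨⟨i, hself i, (hK k hk).1.1 i hi⟩, j, hj, (hK k hk).1.2 j hjk⟩
    _ = 2 * dissipation A u := (mul_sum ..).symm

lemma cutSeparates_of_rank {w : ℕ → ℝ} (hw : Monotone w) {r : ι → ℕ} (hu : ∀ i, u i = w (r i))
    (k : ℕ) : CutSeparates (fun i => r i ≤ k) (w k) (w (k + 1)) u :=
  ⟨fun i hi => (hu i).trans_le (hw hi), fun i hi => (hw (not_le.1 hi)).trans_eq (hu i).symm⟩

end Cuts

section Trajectory

variable {N : ℕ → ι → Finset ι} {y : ℕ → ι → ℝ}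
  (hsym : ∀ t i j, j ∈ N t i ↔ i ∈ N t j) (hself : ∀ t i, i ∈ N t i)
  (hy : ∀ t, y (t + 1) = eqNbrAvg (N t) (y t))
include hsym hself hy

lemma sum_weight_mul_sub_eq [Fintype ι] {d : ι → ℕ}
    (hdeg : ∀ t i, (N t i).card = d i ∨ (N t i).card = 1) (c : ℝ) (t : ℕ) :
    ∑ i, (d i : ℝ) * (y t i - c) = ∑ i, (d i : ℝ) * (y 0 i - c) := by
  induction t with
  | zero => rfl
  | succ t ih =>
    simp only [mul_sub, sum_sub_distrib] at ih ⊢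
    rw [hy, sum_weight_mul_eqNbrAvg (hsym t) (hself t) (hdeg t), ih]

lemma sum_range_dissipation_eq [Fintype ι] {d : ι → ℕ}
    (hdeg : ∀ t i, (N t i).card = d i ∨ (N t i).card = 1) (c : ℝ) (T B : ℕ) :
    ∑ s ∈ range B, dissipation (N (T + s)) (y (T + s))
      = ∑ i, (d i : ℝ) * (y T i - c) ^ 2 - ∑ i, (d i : ℝ) * (y (T + B) i - c) ^ 2 := by
  have h : ∀ s, dissipation (N (T + s)) (y (T + s)) = ∑ i, (d i : ℝ) * (y (T + s) i - c) ^ 2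
      - ∑ i, (d i : ℝ) * (y (T + (s + 1)) i - c) ^ 2 := fun s => by
    rw [← add_assoc, hy, sum_weight_mul_sq_sub_sub_eqNbrAvg (hsym _) (hself _) (hdeg _)]
  simp only [h]
  exact sum_range_sub' (fun s => ∑ i, (d i : ℝ) * (y (T + s) i - c) ^ 2) B

lemma CutSeparates.iterate {L : ι → Prop} {α β : ℝ} {T : ℕ} (h : CutSeparates L α β (y T))
    {S : ℕ} (hS : ∀ s < S, ¬ CrossesCut (N (T + s)) L) : CutSeparates L α β (y (T + S)) := by
  induction S with
  | zero => exact h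
  | succ S ih =>
    rw [← add_assoc, hy]
    exact (ih fun s hs => hS s (by omega)).eqNbrAvg_of_not_crossesCut (hsym _) (hself _)
      (hS S (by omega))

lemma sum_sq_gaps_le_two_mul_sum_dissipation [Fintype ι] {T B : ℕ}
    (hconn : ∀ i j, ReflTransGen (fun a b => ∃ t, T ≤ t ∧ t < T + B ∧ b ∈ N t a) i j)
    {w : ℕ → ℝ} (hw : Monotone w) {L : ℕ → ι → Prop} {K : Finset ℕ}
    (hK : ∀ k ∈ K, CutSeparates (L k) (w k) (w (k + 1)) (y T) ∧ (∃ i, L k i) ∧ ∃ j, ¬ L k j) :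
    ∑ k ∈ K, (w (k + 1) - w k) ^ 2 ≤ 2 * ∑ s ∈ range B, dissipation (N (T + s)) (y (T + s)) := by
  classical
  set τ : ℕ → ℕ := fun k => sInf {s | CrossesCut (N (T + s)) (L k)}
  have hτ : ∀ k ∈ K, τ k < B ∧ CrossesCut (N (T + τ k)) (L k) ∧
      CutSeparates (L k) (w k) (w (k + 1)) (y (T + τ k)) := by
    intro k hk
    obtain ⟨-, ⟨i, hi⟩, j, hj⟩ := hK k hk
    obtain ⟨s, hsB, hs⟩ := exists_lt_crossesCut hconn hi hj
    exact ⟨(Nat.sInf_le hs).trans_lt hsB,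
      Nat.sInf_mem (s := {s | CrossesCut (N (T + s)) (L k)}) ⟨s, hs⟩,
      (hK k hk).1.iterate hsym hself hy fun _ => Nat.notMem_of_lt_sInf⟩
  calc ∑ k ∈ K, (w (k + 1) - w k) ^ 2
      = ∑ s ∈ range B, ∑ k ∈ K with τ k = s, (w (k + 1) - w k) ^ 2 :=
        (sum_fiberwise_of_maps_to (fun k hk => mem_range.2 (hτ k hk).1) _).symm
    _ ≤ ∑ s ∈ range B, 2 * dissipation (N (T + s)) (y (T + s)) := by
        refine sum_le_sum fun s _ =>
          sum_sq_gaps_le_two_mul_dissipation (hself _) hw (L := L) fun k hk => ?_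
        obtain ⟨hkK, rfl⟩ := mem_filter.1 hk
        exact ⟨(hτ k hkK).2.2, (hτ k hkK).2.1⟩
    _ = _ := (mul_sum ..).symm

end Trajectory

section Degrees

variable [Fintype ι] {N : ℕ → ι → Finset ι} {d : ι → ℕ} {T B : ℕ}
  (hself : ∀ t i, i ∈ N t i) (hdeg : ∀ t i, (N t i).card = d i ∨ (N t i).card = 1)
  (hconn : ∀ i j, ReflTransGen (fun a b => ∃ t, T ≤ t ∧ t < T + B ∧ b ∈ N t a) i j)
include hself hdeg hconn

lemma weight_le_card [Nontrivial ι] (i : ι) : d i ≤ Fintype.card ι := by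
  obtain ⟨j, hj⟩ := exists_ne i
  obtain ⟨s, -, a, b, rfl, hb, hab⟩ := exists_lt_crossesCut hconn (L := (· = i)) rfl hj
  have h2 : 1 < (N (T + s) a).card := one_lt_card.2 ⟨a, hself _ a, b, hab, Ne.symm hb⟩
  rcases hdeg (T + s) a with h | h
  · exact h ▸ card_le_univ _
  · omega

lemma card_sub_one_mul_sum_weight_le :
    ((Fintype.card ι : ℝ) - 1) * ∑ i, (d i : ℝ) ≤ (Fintype.card ι : ℝ) ^ 3 := by
  rcases subsingleton_or_nontrivial ι with hι | hι
  · have : (Fintype.card ι : ℝ) ≤ 1 := by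
      exact_mod_cast Fintype.card_le_one_iff_subsingleton.2 hι
    calc ((Fintype.card ι : ℝ) - 1) * ∑ i, (d i : ℝ) ≤ 0 :=
          mul_nonpos_of_nonpos_of_nonneg (by linarith) (by positivity)
      _ ≤ (Fintype.card ι : ℝ) ^ 3 := by positivity
  · calc ((Fintype.card ι : ℝ) - 1) * ∑ i, (d i : ℝ)
        ≤ Fintype.card ι * ∑ _i : ι, (Fintype.card ι : ℝ) := by
          gcongr with i
          · linarith
          · exact_mod_cast weight_le_card hself hdeg hconn i
      _ = (Fintype.card ι : ℝ) ^ 3 := by rw [sum_const, card_univ, nsmul_eq_mul]; ring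

end Degrees

lemma exists_monotone_rank {n : ℕ} (f : Fin (n + 1) → ℝ) :
    ∃ (w : ℕ → ℝ) (r : Fin (n + 1) ≃ Fin (n + 1)), Monotone w ∧ ∀ i, f i = w (r i) := by
  set σ := Tuple.sort f
  refine ⟨fun k => f (σ ⟨min k n, by omega⟩), σ.symm, fun a b hab => ?_, fun i => ?_⟩
  · exact Tuple.monotone_sort f (Fin.mk_le_mk.2 (min_le_min_right n hab))
  · simp [min_eq_left (Fin.is_le _)]

end EqualNeighbor

open EqualNeighbor

theorem block_variance_contraction_general
    (n B : ℕ)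
    (N : ℕ → Fin (n + 1) → Finset (Fin (n + 1))) (d : Fin (n + 1) → ℕ)
    (hsym : ∀ t i j, j ∈ N t i ↔ i ∈ N t j)
    (hself : ∀ t i, i ∈ N t i)
    (hdeg : ∀ t i, (N t i).card = d i ∨ (N t i).card = 1)
    (hBconn : ∀ m : ℕ, ∀ i j, Relation.ReflTransGen
      (fun a b => ∃ t, m * B ≤ t ∧ t < (m + 1) * B ∧ b ∈ N t a) i j)
    (x : ℕ → Fin (n + 1) → ℝ)
    (hx : ∀ t i, x (t + 1) i = (∑ j ∈ N t i, x t j) / ((N t i).card : ℝ))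
    (xbar : ℝ)
    (hxbar : xbar = (∑ i, (d i : ℝ) * x 0 i) / ∑ i, (d i : ℝ)) :
    ∀ m : ℕ,
      ∑ i, (d i : ℝ) * (x ((m + 1) * B) i - xbar) ^ 2 ≤
        (1 - 1 / (2 * (n + 1 : ℝ) ^ 3)) *
          ∑ i, (d i : ℝ) * (x (m * B) i - xbar) ^ 2 := by
  intro m
  set T := m * B
  rw [add_one_mul]
  have hy : ∀ t, x (t + 1) = eqNbrAvg (N t) (x t) := fun t => funext (hx t)
  have hconn : ∀ i j, ReflTransGen (fun a b => ∃ t, T ≤ t ∧ t < T + B ∧ b ∈ N t a) i j := by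
    simpa only [add_one_mul] using hBconn m
  set V : ℕ → ℝ := fun t => ∑ i, (d i : ℝ) * (x t i - xbar) ^ 2
  obtain ⟨w, r, hw, hxr⟩ := exists_monotone_rank (x T)
  set S := ∑ k ∈ range n, (w (k + 1) - w k) ^ 2
  have hdecay : S ≤ 2 * (V T - V (T + B)) := by
    rw [← sum_range_dissipation_eq hsym hself hy hdeg]
    refine sum_sq_gaps_le_two_mul_sum_dissipation hsym hself hy hconn hw fun k hk =>
      ⟨cutSeparates_of_rank hw hxr k, ⟨r.symm 0, by simp⟩, r.symm (Fin.last n), ?_⟩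
    simpa using mem_range.1 hk
  have hmean : ∑ i, (d i : ℝ) * (x T i - xbar) = 0 := by
    rw [sum_weight_mul_sub_eq hsym hself hy hdeg, hxbar]
    exact sum_mul_sub_div_sum_eq_zero _ (fun _ => by positivity) _
  have hspread : V T ≤ (∑ i, (d i : ℝ)) * (n * S) := by
    refine (sum_mul_sq_sub_le_of_mem_Icc (a := w 0) (b := w n) (fun _ => by positivity) hmean
      fun i => ?_).trans ?_
    · rw [hxr]
      exact ⟨hw (Nat.zero_le _), hw (Fin.is_le _)⟩
    · gcongr
      exact sq_sub_le_mul_sum_sq_sub w n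
  have hweights : (n : ℝ) * ∑ i, (d i : ℝ) ≤ (n + 1) ^ 3 := by
    simpa using card_sub_one_mul_sum_weight_le hself hdeg hconn
  have hS : 0 ≤ S := sum_nonneg fun _ _ => sq_nonneg _
  have hcontract : V T ≤ 2 * (n + 1 : ℝ) ^ 3 * (V T - V (T + B)) :=
    calc V T ≤ (n * ∑ i, (d i : ℝ)) * S := hspread.trans_eq (by ring)
      _ ≤ (n + 1) ^ 3 * (2 * (V T - V (T + B))) := mul_le_mul hweights hdecay hS (by positivity)
      _ = _ := by ring
  rw [one_sub_div (by positivity), div_mul_eq_mul_div, le_div_iff₀ (by positivity)]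
  linarith

/-- Under the assumptions of the main theorem (B-connected undirected
graphs with self-loops on `n+1` nodes, degrees `d_i(t) ∈ {1, d_i}`), the weighted
variance `V'(x(t)) = Σ_i d_i (x_i(t) - x̄)²` (with `x̄` the invariant `d`-weighted
average of `x(0)`) contracts by a factor `1 - 1/(2(n+1)³)` over each block of `B` steps. -/
theorem block_variance_contraction
    (n B : ℕ) (hB : 0 < B)
    (N : ℕ → Fin (n + 1) → Finset (Fin (n + 1))) (d : Fin (n + 1) → ℕ)
    (hsym : ∀ t i j, j ∈ N t i ↔ i ∈ N t j)
    (hself : ∀ t i, i ∈ N t i)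
    (hdeg : ∀ t i, (N t i).card = d i ∨ (N t i).card = 1)
    (hBconn : ∀ m : ℕ, ∀ i j, Relation.ReflTransGen
      (fun a b => ∃ t, m * B ≤ t ∧ t < (m + 1) * B ∧ b ∈ N t a) i j)
    (x : ℕ → Fin (n + 1) → ℝ)
    (hx : ∀ t i, x (t + 1) i = (∑ j ∈ N t i, x t j) / ((N t i).card : ℝ))
    (xbar : ℝ)
    (hxbar : xbar = (∑ i, (d i : ℝ) * x 0 i) / ∑ i, (d i : ℝ)) :
    ∀ m : ℕ,
      ∑ i, (d i : ℝ) * (x ((m + 1) * B) i - xbar) ^ 2 ≤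
        (1 - 1 / (2 * (n + 1 : ℝ) ^ 3)) *
          ∑ i, (d i : ℝ) * (x (m * B) i - xbar) ^ 2 :=
  block_variance_contraction_general n B N d hsym hself hdeg hBconn x hx xbar hxbar
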